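/- Let ρ be a bipartite density operator on H_A ⊗ H_B with Schmidt number at most k (i.e., ρ is a convex combination of pure states of Schmidt rank ≤ k). Then the operator R_k(ρ) = k ρ_A ⊗ I_B − ρ is positive semidefinite. -/

import Mathlib

/-! Factor the coefficient matrix of a pure state `ψ` as `A * B` where `B` has `r = rank`
orthonormal rows. Then `ψ = (A ⊗ I) w` with `w = vec Bᵀ`, `‖w‖² = r` and
`Tr_B |ψ⟩⟨ψ| ⊗ I = (A ⊗ I)(A ⊗ I)ᴴ`, so `k Tr_B |ψ⟩⟨ψ| ⊗ I - |ψ⟩⟨ψ|` is the congruence by `A ⊗ I`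
of `k I - |w⟩⟨w|`, which is positive because `|w⟩⟨w| ≤ ‖w‖² I = r I` by Cauchy–Schwarz.
The map `ρ ↦ k ρ_A ⊗ I - ρ` is linear, so positivity passes to nonnegative combinations. -/

open Matrix Kronecker ComplexOrder

/-- Partial trace over the second factor. -/
noncomputable def ptraceB (dA dB : ℕ) (ρ : Matrix (Fin dA × Fin dB) (Fin dA × Fin dB) ℂ) :
    Matrix (Fin dA) (Fin dA) ℂ :=
  fun a a' => ∑ b, ρ (a, b) (a', b)

/-- `ρ` has Schmidt number at most `k`: it is a nonnegative combination of pure states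
each of Schmidt rank at most `k` (the Schmidt rank of a pure state being the rank of
the matrix of its coefficients). -/
noncomputable def HasSchmidtNumberLE (dA dB : ℕ)
    (ρ : Matrix (Fin dA × Fin dB) (Fin dA × Fin dB) ℂ) (k : ℕ) : Prop :=
  ∃ (n : ℕ) (c : Fin n → ℝ) (v : Fin n → (Fin dA × Fin dB → ℂ)),
    (∀ i, 0 ≤ c i) ∧
    ρ = ∑ i, ((c i : ℂ)) • Matrix.vecMulVec (v i) (star (v i)) ∧
    ∀ i, (Matrix.of fun a b => v i (a, b)).rank ≤ k

theorem Matrix.exists_eq_mul_of_orthonormal_rows {𝕜 m n : Type*} [RCLike 𝕜] [Fintype m]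
    [Fintype n] (M : Matrix m n 𝕜) :
    ∃ (r : ℕ) (A : Matrix m (Fin r) 𝕜) (B : Matrix (Fin r) n 𝕜),
      r = M.rank ∧ M = A * B ∧ B * Bᴴ = 1 := by
  let K : Submodule 𝕜 (EuclideanSpace 𝕜 n) := .span 𝕜 (Set.range fun i => WithLp.toLp 2 (M i))
  have hK : Module.finrank 𝕜 K = M.rank := by
    have : K = (Submodule.span 𝕜 (Set.range M.row)).map
        ((WithLp.linearEquiv 2 𝕜 (n → 𝕜)).symm : (n → 𝕜) →ₗ[𝕜] EuclideanSpace 𝕜 n) := by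
      rw [Submodule.map_span, ← Set.range_comp]; rfl
    rw [this, LinearEquiv.finrank_map_eq, M.rank_eq_finrank_span_row]
  let b := (stdOrthonormalBasis 𝕜 K).reindex (finCongr hK)
  have hrow i : WithLp.toLp 2 (M i) ∈ K := Submodule.subset_span ⟨i, rfl⟩
  refine ⟨M.rank, of fun i j => inner 𝕜 (b j : EuclideanSpace 𝕜 n) (WithLp.toLp 2 (M i)),
    of fun j c => (b j : EuclideanSpace 𝕜 n) c, rfl, ?_, ?_⟩
  · ext i c
    have := congr_arg (fun x : K => (x : EuclideanSpace 𝕜 n) c) (b.sum_repr' ⟨_, hrow i⟩)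
    simpa [mul_apply, Submodule.coe_sum, mul_comm] using this.symm
  · ext i j
    simpa [mul_apply, EuclideanSpace.inner_eq_star_dotProduct, dotProduct, eq_comm, one_apply]
      using b.inner_eq_ite j i

theorem Matrix.posSemidef_dotProduct_smul_one_sub_vecMulVec {𝕜 n : Type*} [RCLike 𝕜] [Fintype n]
    [DecidableEq n] (w : n → 𝕜) :
    ((star w ⬝ᵥ w) • (1 : Matrix n n 𝕜) - vecMulVec w (star w)).PosSemidef := by
  have hnorm (x : n → 𝕜) : star x ⬝ᵥ x = (‖WithLp.toLp 2 x‖ : 𝕜) ^ 2 := by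
    rw [← inner_self_eq_norm_sq_to_K, EuclideanSpace.inner_toLp_toLp, dotProduct_comm]
  refine .of_dotProduct_mulVec_nonneg ?_ fun x => ?_
  · exact (isHermitian_one.smul (star_dotProduct w w).symm).sub
      (posSemidef_vecMulVec_self_star w).isHermitian
  · have hinner : (star x ⬝ᵥ w) * (star w ⬝ᵥ x) =
        (‖inner 𝕜 (WithLp.toLp 2 w) (WithLp.toLp 2 x)‖ : 𝕜) ^ 2 := by
      rw [EuclideanSpace.inner_toLp_toLp, ← RCLike.mul_conj, ← RCLike.star_def, star_dotProduct,
        dotProduct_comm x, mul_comm]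
    have hcs : ‖inner 𝕜 (WithLp.toLp 2 w) (WithLp.toLp 2 x)‖ ^ 2 ≤
        ‖WithLp.toLp 2 w‖ ^ 2 * ‖WithLp.toLp 2 x‖ ^ 2 := by
      rw [← mul_pow]
      exact pow_le_pow_left₀ (norm_nonneg _) (norm_inner_le_norm _ _) 2
    rw [sub_mulVec, smul_mulVec, one_mulVec, vecMulVec_mulVec, dotProduct_sub, dotProduct_smul,
      dotProduct_smul, smul_eq_mul, op_smul_eq_mul, hnorm w, hnorm x, hinner]
    exact_mod_cast (RCLike.ofReal_nonneg (K := 𝕜)).mpr (sub_nonneg.mpr hcs)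

theorem Matrix.vecMulVec_mulVec_self_star {𝕜 m n : Type*} [RCLike 𝕜] [Fintype n]
    (N : Matrix m n 𝕜) (w : n → 𝕜) :
    vecMulVec (N *ᵥ w) (star (N *ᵥ w)) = N * vecMulVec w (star w) * Nᴴ := by
  rw [mul_vecMulVec, vecMulVec_mul, star_mulVec]

noncomputable def reductionMap (dA dB k : ℕ) :
    Matrix (Fin dA × Fin dB) (Fin dA × Fin dB) ℂ →ₗ[ℂ]
      Matrix (Fin dA × Fin dB) (Fin dA × Fin dB) ℂ where
  toFun ρ := (k : ℂ) • (ptraceB dA dB ρ ⊗ₖ (1 : Matrix (Fin dB) (Fin dB) ℂ)) - ρ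
  map_add' ρ σ := by
    ext ⟨a, b⟩ ⟨a', b'⟩
    simp only [ptraceB, Matrix.add_apply, Matrix.sub_apply, Matrix.smul_apply, kroneckerMap_apply,
      Finset.sum_add_distrib]
    ring
  map_smul' c ρ := by
    ext ⟨a, b⟩ ⟨a', b'⟩
    simp only [ptraceB, Matrix.smul_apply, Matrix.sub_apply, kroneckerMap_apply, smul_eq_mul,
      ← Finset.mul_sum, RingHom.id_apply]
    ring

theorem ptraceB_vecMulVec_self_star {dA dB : ℕ} (v : Fin dA × Fin dB → ℂ) :
    ptraceB dA dB (vecMulVec v (star v)) =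
      (of fun a b => v (a, b)) * (of fun a b => v (a, b))ᴴ := by
  ext a a'
  simp [ptraceB, vecMulVec_apply, mul_apply]

theorem posSemidef_reductionMap_vecMulVec_self_star {dA dB k : ℕ} (v : Fin dA × Fin dB → ℂ)
    (hrank : (of fun a b => v (a, b)).rank ≤ k) :
    (reductionMap dA dB k (vecMulVec v (star v))).PosSemidef := by
  obtain ⟨r, A, B, hr, hAB, hB⟩ := exists_eq_mul_of_orthonormal_rows (of fun a b => v (a, b))
  set w := vec Bᵀ
  have hvw : v = (A ⊗ₖ (1 : Matrix (Fin dB) (Fin dB) ℂ)) *ᵥ w := by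
    rw [kronecker_mulVec_vec, Matrix.one_mul, ← transpose_mul, ← hAB]; rfl
  have hptrace : ptraceB dA dB (vecMulVec v (star v)) ⊗ₖ (1 : Matrix (Fin dB) (Fin dB) ℂ) =
      (A ⊗ₖ (1 : Matrix (Fin dB) (Fin dB) ℂ)) * (A ⊗ₖ (1 : Matrix (Fin dB) (Fin dB) ℂ))ᴴ := by
    rw [ptraceB_vecMulVec_self_star, hAB, conjTranspose_mul, Matrix.mul_assoc,
      ← Matrix.mul_assoc B, hB, Matrix.one_mul, conjTranspose_kronecker, conjTranspose_one,
      ← mul_kronecker_mul, Matrix.mul_one]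
  have hnorm : star w ⬝ᵥ w = r := by
    rw [star_vec_dotProduct_vec, trace_mul_comm, conjTranspose_transpose_eq_transpose_conjTranspose,
      ← transpose_mul, trace_transpose, trace_mul_comm, hB, trace_one, Fintype.card_fin]
  have hreduction : reductionMap dA dB k (vecMulVec v (star v)) =
      (A ⊗ₖ (1 : Matrix (Fin dB) (Fin dB) ℂ)) * ((k : ℂ) • 1 - vecMulVec w (star w)) *
        (A ⊗ₖ (1 : Matrix (Fin dB) (Fin dB) ℂ))ᴴ := by
    change (k : ℂ) • (ptraceB dA dB _ ⊗ₖ 1) - _ = _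
    rw [hptrace, hvw, vecMulVec_mulVec_self_star, Matrix.mul_sub, Matrix.sub_mul, Matrix.mul_smul,
      Matrix.smul_mul, Matrix.mul_one]
  rw [hreduction]
  refine PosSemidef.mul_mul_conjTranspose_same ?_ _
  have hsplit : (k : ℂ) • (1 : Matrix _ _ ℂ) - vecMulVec w (star w) =
      ((k : ℂ) - star w ⬝ᵥ w) • 1 + ((star w ⬝ᵥ w) • 1 - vecMulVec w (star w)) := by
    rw [sub_smul]; abel
  rw [hsplit]
  refine .add (.smul .one ?_) (posSemidef_dotProduct_smul_one_sub_vecMulVec w)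
  rw [hnorm, sub_nonneg]
  exact_mod_cast hr ▸ hrank

theorem stmt19_general (dA dB k : ℕ)
    (ρ : Matrix (Fin dA × Fin dB) (Fin dA × Fin dB) ℂ)
    (hSN : HasSchmidtNumberLE dA dB ρ k) :
    ((k : ℂ) • (ptraceB dA dB ρ ⊗ₖ (1 : Matrix (Fin dB) (Fin dB) ℂ)) - ρ).PosSemidef := by
  obtain ⟨n, c, v, hc, rfl, hrank⟩ := hSN
  change (reductionMap dA dB k _).PosSemidef
  rw [map_sum]
  refine posSemidef_sum _ fun i _ => ?_
  rw [map_smul]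
  exact (posSemidef_reductionMap_vecMulVec_self_star (v i) (hrank i)).smul
    (Complex.zero_le_real.mpr (hc i))

theorem stmt19 (dA dB k : ℕ) (hk : 0 < k)
    (ρ : Matrix (Fin dA × Fin dB) (Fin dA × Fin dB) ℂ)
    (hρpsd : ρ.PosSemidef) (htr : ρ.trace = 1)
    (hSN : HasSchmidtNumberLE dA dB ρ k) :
    ((k : ℂ) • (ptraceB dA dB ρ ⊗ₖ (1 : Matrix (Fin dB) (Fin dB) ℂ)) - ρ).PosSemidef :=
  stmt19_general dA dB k ρ hSN
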